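/- arXiv:2008.05740 — 2 statements merged into one kernel-verified Lean document; each statement's English description precedes it below -/
import Mathlib

section
/- Fix real constants C > 0 and q > 2, and let f : ℝ → ℝ be defined by f(x) = x − (C+1)|x|^{q−2}·x for |x| ≤ 1 and f(x) = x·log|x| − C·x for |x| > 1, with F(x) = ∫₀^x f(s) ds. Then (f(x)·x − 2F(x))/x² → 1/2 as x → +∞ and also as x → −∞. In particular, liminf_{x→±∞} (f(x)·x − 2F(x))/|x|^τ ≥ 1/2 > 0 holds with τ = 2, so the paper's quasi-monotonicity condition H1(iii) is satisfied with τ = 2. -/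
open Filter MeasureTheory

/-!
For `|x| ≥ 1` the nonlinearity is `f x = x log x - C x` (Mathlib's `Real.log x` is `log |x|`), whose
primitive `G x = x²/2 · log x - x²/4 - C x²/2` satisfies `x f(x) - 2 G(x) = x²/2` identically. Hence
`f(x) x - 2F(x) = x²/2 + const` on each of the rays `x ≥ 1` and `x ≤ -1`, and dividing by `x²` gives
the limit `1/2` at `±∞`.
-/

open Set Real intervalIntegral

noncomputable def logPrimitive (C x : ℝ) : ℝ :=
  x ^ 2 / 2 * log x - x ^ 2 / 4 - C * x ^ 2 / 2

lemma hasDerivAt_logPrimitive (C : ℝ) {t : ℝ} (ht : t ≠ 0) :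
    HasDerivAt (logPrimitive C) (t * log t - C * t) t := by
  have h := ((((hasDerivAt_pow 2 t).div_const 2).mul (hasDerivAt_log ht)).sub
    ((hasDerivAt_pow 2 t).div_const 4)).sub (((hasDerivAt_pow 2 t).const_mul C).div_const 2)
  refine h.congr_deriv ?_
  field_simp
  ring

lemma mul_sub_two_mul_logPrimitive (C x : ℝ) :
    x * (x * log x - C * x) - 2 * logPrimitive C x = x ^ 2 / 2 := by
  unfold logPrimitive
  ring

lemma integral_eq_add_sub_of_eqOn_of_hasDerivAt {f g G : ℝ → ℝ} {b a x : ℝ}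
    (hba : IntervalIntegrable f volume b a) (hfg : EqOn f g (uIcc a x))
    (hG : ∀ t ∈ uIcc a x, HasDerivAt G (g t) t) (hg : IntervalIntegrable g volume a x) :
    ∫ s in b..x, f s = (∫ s in b..a, f s) + (G x - G a) := by
  have hax : IntervalIntegrable f volume a x :=
    (intervalIntegrable_congr (hfg.mono Ioc_subset_Icc_self)).mpr hg
  rw [← integral_add_adjacent_intervals hba hax, integral_congr hfg,
    integral_eq_sub_of_hasDerivAt hG hg]

lemma tendsto_div_sq_of_eventuallyEq {φ : ℝ → ℝ} {c : ℝ} {l : Filter ℝ} (hl : l ≤ cocompact ℝ)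
    (hφ : φ =ᶠ[l] fun x => x ^ 2 / 2 + c) :
    Tendsto (fun x => φ x / x ^ 2) l (nhds (1 / 2)) := by
  have hsq : Tendsto (fun x : ℝ => x ^ 2) l atTop := by
    simpa only [Function.comp_def, norm_eq_abs, sq_abs] using
      (tendsto_pow_atTop two_ne_zero).comp (tendsto_norm_cocompact_atTop.mono_left hl)
  have hlim : Tendsto (fun x => 1 / 2 + c / x ^ 2) l (nhds (1 / 2 + 0)) :=
    tendsto_const_nhds.add (tendsto_const_nhds.div_atTop hsq)
  rw [add_zero] at hlim
  refine hlim.congr' ?_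
  filter_upwards [hφ, hsq.eventually_gt_atTop 0] with x hx hx0
  rw [hx, add_div, div_right_comm, div_self hx0.ne']

section ModelNonlinearity

variable {C q : ℝ} {f : ℝ → ℝ}
  (hf1 : ∀ x : ℝ, |x| ≤ 1 → f x = x - (C + 1) * |x| ^ (q - 2) * x)
  (hf2 : ∀ x : ℝ, 1 < |x| → f x = x * log |x| - C * x)
include hf1 hf2

lemma eq_mul_log_sub_mul_of_one_le_abs {s : ℝ} (hs : 1 ≤ |s|) : f s = s * log s - C * s := by
  rcases hs.eq_or_lt with h | h
  · rw [hf1 s h.ge, ← h, one_rpow, ← log_abs, ← h, log_one]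
    ring
  · rw [hf2 s h, log_abs]

omit hf2 in
lemma intervalIntegrable_zero_of_abs_le_one (hq : 2 ≤ q) {a : ℝ} (ha : |a| ≤ 1) :
    IntervalIntegrable f volume 0 a := by
  have hcont : Continuous fun s : ℝ => s - (C + 1) * |s| ^ (q - 2) * s :=
    continuous_id.sub ((continuous_const.mul
      (continuous_abs.rpow_const fun _ => Or.inr (by linarith))).mul continuous_id)
  have hsub : uIcc 0 a ⊆ Icc (-1) 1 :=
    uIcc_subset_Icc ⟨by norm_num, by norm_num⟩ (abs_le.mp ha)
  exact (hcont.continuousOn.congr fun s hs => hf1 s (abs_le.mpr (hsub hs))).intervalIntegrable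

lemma mul_sub_two_integral_eq (hq : 2 ≤ q) {a x : ℝ} (ha : |a| ≤ 1)
    (hax : uIcc a x ⊆ {s | 1 ≤ |s|}) :
    f x * x - 2 * ∫ s in (0 : ℝ)..x, f s
      = x ^ 2 / 2 + 2 * (logPrimitive C a - ∫ s in (0 : ℝ)..a, f s) := by
  have hfg : EqOn f (fun s => s * log s - C * s) (uIcc a x) := fun s hs =>
    eq_mul_log_sub_mul_of_one_le_abs hf1 hf2 (hax hs)
  have hx : 1 ≤ |x| := hax right_mem_uIcc
  rw [integral_eq_add_sub_of_eqOn_of_hasDerivAt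
      (intervalIntegrable_zero_of_abs_le_one hf1 hq ha) hfg
      (fun t ht => hasDerivAt_logPrimitive C (abs_pos.mp (zero_lt_one.trans_le (hax ht))))
      ((continuous_mul_log.sub (continuous_const.mul continuous_id)).intervalIntegrable a x),
    eq_mul_log_sub_mul_of_one_le_abs hf1 hf2 hx, ← mul_sub_two_mul_logPrimitive C x]
  ring

end ModelNonlinearity

theorem stmt_1_general (C q : ℝ) (hq : 2 < q)
    (f F : ℝ → ℝ)
    (hf1 : ∀ x : ℝ, |x| ≤ 1 → f x = x - (C + 1) * |x| ^ (q - 2) * x)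
    (hf2 : ∀ x : ℝ, 1 < |x| → f x = x * Real.log |x| - C * x)
    (hF : ∀ x : ℝ, F x = ∫ s in (0:ℝ)..x, f s) :
    Tendsto (fun x : ℝ => (f x * x - 2 * F x) / x ^ 2) atTop (nhds (1 / 2)) ∧
    Tendsto (fun x : ℝ => (f x * x - 2 * F x) / x ^ 2) atBot (nhds (1 / 2)) ∧
    (1 / 2 : ℝ) ≤ liminf (fun x : ℝ => (f x * x - 2 * F x) / |x| ^ (2 : ℝ)) atTop ∧
    (1 / 2 : ℝ) ≤ liminf (fun x : ℝ => (f x * x - 2 * F x) / |x| ^ (2 : ℝ)) atBot ∧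
    (0 : ℝ) < 1 / 2 := by
  simp only [hF, rpow_two, sq_abs]
  have hTop : Tendsto (fun x : ℝ => (f x * x - 2 * ∫ s in (0:ℝ)..x, f s) / x ^ 2) atTop
      (nhds (1 / 2)) :=
    tendsto_div_sq_of_eventuallyEq atTop_le_cocompact <| (eventually_ge_atTop 1).mono fun x hx =>
      mul_sub_two_integral_eq hf1 hf2 hq.le abs_one.le fun s hs => by
        rw [uIcc_of_le hx] at hs
        exact hs.1.trans (le_abs_self s)
  have hBot : Tendsto (fun x : ℝ => (f x * x - 2 * ∫ s in (0:ℝ)..x, f s) / x ^ 2) atBot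
      (nhds (1 / 2)) :=
    tendsto_div_sq_of_eventuallyEq atBot_le_cocompact <| (eventually_le_atBot (-1)).mono fun x hx =>
      mul_sub_two_integral_eq hf1 hf2 hq.le (a := -1) (by norm_num) fun s hs => by
        rw [uIcc_of_ge hx] at hs
        exact (le_neg.mp hs.2).trans (neg_le_abs s)
  exact ⟨hTop, hBot, hTop.liminf_eq.ge, hBot.liminf_eq.ge, one_half_pos⟩

/-- For the model nonlinearity of the paper (`C > 0`, `q > 2`),
`(f(x)x - 2F(x))/x² → 1/2` as `x → ±∞`; in particular the liminf of
`(f(x)x - 2F(x))/|x|^τ` at `±∞` with `τ = 2` is at least `1/2 > 0`,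
so hypothesis H1(iii) holds with `τ = 2`. -/
theorem stmt_1 (C q : ℝ) (hC : 0 < C) (hq : 2 < q)
    (f F : ℝ → ℝ)
    (hf1 : ∀ x : ℝ, |x| ≤ 1 → f x = x - (C + 1) * |x| ^ (q - 2) * x)
    (hf2 : ∀ x : ℝ, 1 < |x| → f x = x * Real.log |x| - C * x)
    (hF : ∀ x : ℝ, F x = ∫ s in (0:ℝ)..x, f s) :
    Tendsto (fun x : ℝ => (f x * x - 2 * F x) / x ^ 2) atTop (nhds (1 / 2)) ∧
    Tendsto (fun x : ℝ => (f x * x - 2 * F x) / x ^ 2) atBot (nhds (1 / 2)) ∧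
    (1 / 2 : ℝ) ≤ liminf (fun x : ℝ => (f x * x - 2 * F x) / |x| ^ (2 : ℝ)) atTop ∧
    (1 / 2 : ℝ) ≤ liminf (fun x : ℝ => (f x * x - 2 * F x) / |x| ^ (2 : ℝ)) atBot ∧
    (0 : ℝ) < 1 / 2 :=
  stmt_1_general C q hq f F hf1 hf2 hF
end

section
/- Fix real constants C > 0 and q > 2, and let f : ℝ → ℝ be defined by f(x) = x − (C+1)|x|^{q−2}·x for |x| ≤ 1 and f(x) = x·log|x| − C·x for |x| > 1, with F(x) = ∫₀^x f(s) ds. Then for every real q' > 2 one has f(x)·x − q'·F(x) → −∞ as x → +∞. Consequently f fails the Ambrosetti–Rabinowitz condition: there exist no q' > 2 and M > 0 such that 0 < q'·F(x) ≤ f(x)·x for all x ≥ M. -/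
/-!
On `[1, ∞)` the nonlinearity is `f(s) = s log s - C s`, so `F(x) = x² log x / 2 + O(x²)` and
`f(x) x - q' F(x) = (1 - q'/2) x² log x + O(x²)`, which tends to `-∞` because `q' > 2`. For
AR-type growth one would need `f(x) x` to beat `F(x)` by a fixed factor `q' > 2`; the logarithm
only gives a factor tending to `2`.
-/

open Filter MeasureTheory Real

theorem hasDerivAt_sq_mul_log {x : ℝ} (hx : x ≠ 0) :
    HasDerivAt (fun s : ℝ => s ^ 2 / 2 * log s - s ^ 2 / 4) (x * log x) x := by
  refine ((((hasDerivAt_pow 2 x).div_const 2).mul (hasDerivAt_log hx)).sub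
    ((hasDerivAt_pow 2 x).div_const 4)).congr_deriv ?_
  field_simp
  ring

theorem integral_mul_log_of_pos {a b : ℝ} (ha : 0 < a) (hb : 0 < b) :
    ∫ s in a..b, s * log s = (b ^ 2 / 2 * log b - b ^ 2 / 4) - (a ^ 2 / 2 * log a - a ^ 2 / 4) := by
  refine intervalIntegral.integral_eq_sub_of_hasDerivAt (fun s hs => hasDerivAt_sq_mul_log ?_)
    (continuous_mul_log.intervalIntegrable _ _)
  rintro rfl
  rcases Set.mem_uIcc.mp hs with h | h <;> linarith [h.1, h.2]

theorem tendsto_sq_mul_log_add_atBot {a : ℝ} (ha : a < 0) (b c : ℝ) :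
    Tendsto (fun x : ℝ => x ^ 2 * (a * log x + b) + c) atTop atBot := by
  refine tendsto_atBot_add_const_right _ c ((tendsto_pow_atTop two_ne_zero).atTop_mul_atBot₀ ?_)
  exact tendsto_atBot_add_const_right _ b (tendsto_log_atTop.const_mul_atTop_of_neg ha)

section ModelNonlinearity

variable {C q : ℝ} {f F : ℝ → ℝ}

theorem model_eq_of_one_le (hf1 : ∀ x : ℝ, |x| ≤ 1 → f x = x - (C + 1) * |x| ^ (q - 2) * x)
    (hf2 : ∀ x : ℝ, 1 < |x| → f x = x * log |x| - C * x) {s : ℝ} (hs : 1 ≤ s) :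
    f s = s * log s - C * s := by
  rcases hs.eq_or_lt with rfl | hs
  · simp [hf1 1 (by norm_num)]
  · rw [hf2 s (by rwa [abs_of_pos (by linarith)]), abs_of_pos (by linarith)]

theorem model_intervalIntegrable_zero_one (hq : 2 ≤ q)
    (hf1 : ∀ x : ℝ, |x| ≤ 1 → f x = x - (C + 1) * |x| ^ (q - 2) * x) :
    IntervalIntegrable f volume 0 1 := by
  have hcont : Continuous fun x : ℝ => x - (C + 1) * |x| ^ (q - 2) * x := by
    have := Real.continuous_rpow_const (sub_nonneg.mpr hq)
    fun_prop
  refine (hcont.continuousOn.congr fun x hx => hf1 x ?_).intervalIntegrable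
  rw [Set.uIcc_of_le zero_le_one] at hx
  rw [abs_of_nonneg hx.1]
  exact hx.2

theorem model_primitive_eq (hq : 2 ≤ q)
    (hf1 : ∀ x : ℝ, |x| ≤ 1 → f x = x - (C + 1) * |x| ^ (q - 2) * x)
    (hf2 : ∀ x : ℝ, 1 < |x| → f x = x * log |x| - C * x)
    (hF : ∀ x : ℝ, F x = ∫ s in (0:ℝ)..x, f s) {x : ℝ} (hx : 1 ≤ x) :
    F x = F 1 + (x ^ 2 / 2 * log x - x ^ 2 / 4) + 1 / 4 - C * (x ^ 2 - 1) / 2 := by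
  have heq : Set.EqOn f (fun s => s * log s - C * s) (Set.uIcc 1 x) := fun s hs =>
    model_eq_of_one_le hf1 hf2 (Set.uIcc_of_le hx ▸ hs).1
  have hint : IntervalIntegrable f volume 1 x :=
    ((continuous_mul_log.sub (continuous_const_mul C)).continuousOn.congr
      heq).intervalIntegrable
  rw [hF, hF, ← intervalIntegral.integral_add_adjacent_intervals
    (model_intervalIntegrable_zero_one hq hf1) hint, intervalIntegral.integral_congr heq,
    intervalIntegral.integral_sub (g := fun s => C * s) (continuous_mul_log.intervalIntegrable _ _)
      ((continuous_const_mul C).intervalIntegrable _ _),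
    intervalIntegral.integral_const_mul, integral_id,
    integral_mul_log_of_pos one_pos (by linarith)]
  simp only [one_pow, one_div, log_one, mul_zero, zero_sub, sub_neg_eq_add]
  ring

end ModelNonlinearity

theorem stmt_2_general (C q : ℝ) (hq : 2 < q)
    (f F : ℝ → ℝ)
    (hf1 : ∀ x : ℝ, |x| ≤ 1 → f x = x - (C + 1) * |x| ^ (q - 2) * x)
    (hf2 : ∀ x : ℝ, 1 < |x| → f x = x * Real.log |x| - C * x)
    (hF : ∀ x : ℝ, F x = ∫ s in (0:ℝ)..x, f s) :
    (∀ q' : ℝ, 2 < q' →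
      Tendsto (fun x : ℝ => f x * x - q' * F x) atTop atBot) ∧
    ¬ ∃ q' : ℝ, 2 < q' ∧ ∃ M : ℝ, 0 < M ∧
        ∀ x : ℝ, M ≤ x → 0 < q' * F x ∧ q' * F x ≤ f x * x := by
  have hdiv : ∀ q' : ℝ, 2 < q' → Tendsto (fun x : ℝ => f x * x - q' * F x) atTop atBot := by
    intro q' hq'
    refine (tendsto_sq_mul_log_add_atBot (a := 1 - q' / 2) (by linarith)
      (q' / 4 + C * q' / 2 - C) (-(q' * (F 1 + 1 / 4 + C / 2)))).congr' ?_
    filter_upwards [eventually_ge_atTop 1] with x hx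
    rw [model_eq_of_one_le hf1 hf2 hx, model_primitive_eq hq.le hf1 hf2 hF hx]
    ring
  refine ⟨hdiv, ?_⟩
  rintro ⟨q', hq', M, -, hAR⟩
  obtain ⟨x, hneg, hxM⟩ :=
    (((hdiv q' hq').eventually_lt_atBot 0).and (eventually_ge_atTop M)).exists
  linarith [(hAR x hxM).2]

/-- For the model nonlinearity of the paper (`C > 0`, `q > 2`), for every `q' > 2`
one has `f(x)x - q' F(x) → -∞` as `x → +∞`; consequently the Ambrosetti–Rabinowitz
condition fails: there are no `q' > 2` and `M > 0` with `0 < q' F(x) ≤ f(x) x`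
for all `x ≥ M`. -/
theorem stmt_2 (C q : ℝ) (hC : 0 < C) (hq : 2 < q)
    (f F : ℝ → ℝ)
    (hf1 : ∀ x : ℝ, |x| ≤ 1 → f x = x - (C + 1) * |x| ^ (q - 2) * x)
    (hf2 : ∀ x : ℝ, 1 < |x| → f x = x * Real.log |x| - C * x)
    (hF : ∀ x : ℝ, F x = ∫ s in (0:ℝ)..x, f s) :
    (∀ q' : ℝ, 2 < q' →
      Tendsto (fun x : ℝ => f x * x - q' * F x) atTop atBot) ∧
    ¬ ∃ q' : ℝ, 2 < q' ∧ ∃ M : ℝ, 0 < M ∧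
        ∀ x : ℝ, M ≤ x → 0 < q' * F x ∧ q' * F x ≤ f x * x :=
  stmt_2_general C q hq f F hf1 hf2 hF
end
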